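/- arXiv:2106.05190 — 5 statements merged into one kernel-verified Lean document; each statement's English description precedes it below -/
import Mathlib

section
/- Fix real numbers σ11 > 0, σ22 > 0, s11, s22, s12, A, and C. For t in the open interval D = (−√(σ11·σ22), √(σ11·σ22)) define v(t) = σ22 − t²/σ11 (which is positive on D), q(t) = s22 − 2·(t/σ11)·s12 + (t²/σ11²)·s11, and η(t) = C − (A/2)·log v(t) − q(t)/(2·v(t)); define the polynomial P(t) = s12·σ11·σ22 + (σ11·σ22·A − s22·σ11 − s11·σ22)·t + s12·t² − A·t³. Then for every t ∈ D, η is differentiable at t with derivative η′(t) = P(t)/(t² − σ11·σ22)². -/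
open Real

theorem hasDerivAt_const_sub_mul_log_sub_div_two_mul {v q : ℝ → ℝ} {v' q' t : ℝ}
    (hv : HasDerivAt v v' t) (hq : HasDerivAt q q' t) (hv0 : v t ≠ 0) (A C : ℝ) :
    HasDerivAt (fun t => C - A / 2 * log (v t) - q t / (2 * v t))
      (-(A / 2 * (v' / v t)) - (q' * v t - q t * v') / (2 * v t ^ 2)) t := by
  have hquot := hq.div (hv.const_mul 2) (mul_ne_zero two_ne_zero hv0)
  refine (((hasDerivAt_const t C).sub ((hv.log hv0).const_mul (A / 2))).sub hquot).congr_deriv ?_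
  field_simp
  ring

theorem hasDerivAt_sub_sq_div (a b t : ℝ) :
    HasDerivAt (fun t : ℝ => b - t ^ 2 / a) (-(2 * t / a)) t := by
  simpa using ((hasDerivAt_pow 2 t).div_const a).const_sub b

theorem hasDerivAt_quadratic_residual (a s11 s22 s12 t : ℝ) :
    HasDerivAt (fun t : ℝ => s22 - 2 * (t / a) * s12 + t ^ 2 / a ^ 2 * s11)
      (2 * t / a ^ 2 * s11 - 2 / a * s12) t := by
  have hlin := (((hasDerivAt_id t).div_const a).const_mul 2).mul_const s12
  have hsq := ((hasDerivAt_pow 2 t).div_const (a ^ 2)).mul_const s11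
  refine ((hlin.const_sub s22).add hsq).congr_deriv ?_
  simp only [Nat.cast_ofNat]
  ring

theorem eta_deriv_eq {σ11 σ22 t : ℝ} (s11 s22 s12 A : ℝ) (h11 : σ11 ≠ 0)
    (ht : t ^ 2 ≠ σ11 * σ22) :
    -(A / 2 * (-(2 * t / σ11) / (σ22 - t ^ 2 / σ11)))
        - ((2 * t / σ11 ^ 2 * s11 - 2 / σ11 * s12) * (σ22 - t ^ 2 / σ11)
          - (s22 - 2 * (t / σ11) * s12 + t ^ 2 / σ11 ^ 2 * s11) * -(2 * t / σ11))
          / (2 * (σ22 - t ^ 2 / σ11) ^ 2)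
      = (s12 * σ11 * σ22 + (σ11 * σ22 * A - s22 * σ11 - s11 * σ22) * t
          + s12 * t ^ 2 - A * t ^ 3) / (t ^ 2 - σ11 * σ22) ^ 2 := by
  have hv : σ22 - t ^ 2 / σ11 = -(t ^ 2 - σ11 * σ22) / σ11 := by field_simp; ring
  have hd : t ^ 2 - σ11 * σ22 ≠ 0 := sub_ne_zero.mpr ht
  rw [hv]
  field_simp
  ring

theorem eta_hasDerivAt_general
    (σ11 σ22 s11 s22 s12 A C : ℝ) (h11 : 0 < σ11) :
    ∀ t ∈ Set.Ioo (-Real.sqrt (σ11 * σ22)) (Real.sqrt (σ11 * σ22)),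
      HasDerivAt
        (fun t : ℝ => C - A / 2 * Real.log (σ22 - t ^ 2 / σ11)
          - (s22 - 2 * (t / σ11) * s12 + t ^ 2 / σ11 ^ 2 * s11)
            / (2 * (σ22 - t ^ 2 / σ11)))
        ((s12 * σ11 * σ22 + (σ11 * σ22 * A - s22 * σ11 - s11 * σ22) * t
            + s12 * t ^ 2 - A * t ^ 3) / (t ^ 2 - σ11 * σ22) ^ 2)
        t := by
  intro t ht
  have ht2 : t ^ 2 < σ11 * σ22 := Real.sq_lt.mpr ht
  have hv : 0 < σ22 - t ^ 2 / σ11 := by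
    rw [sub_pos, div_lt_iff₀ h11]
    linarith
  exact (hasDerivAt_const_sub_mul_log_sub_div_two_mul (hasDerivAt_sub_sq_div σ11 σ22 t)
    (hasDerivAt_quadratic_residual σ11 s11 s22 s12 t) hv.ne' A C).congr_deriv
    (eta_deriv_eq s11 s22 s12 A h11.ne' ht2.ne)

/-- On the open interval `(−√(σ11·σ22), √(σ11·σ22))`, the profile log-likelihood `η`
of the DPER algorithm is differentiable with derivative `P(t) / (t² − σ11·σ22)²`,
where `P` is the cubic polynomial of Theorems 2 and 4. -/
theorem eta_hasDerivAt
    (σ11 σ22 s11 s22 s12 A C : ℝ) (h11 : 0 < σ11) (h22 : 0 < σ22) :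
    ∀ t ∈ Set.Ioo (-Real.sqrt (σ11 * σ22)) (Real.sqrt (σ11 * σ22)),
      HasDerivAt
        (fun t : ℝ => C - A / 2 * Real.log (σ22 - t ^ 2 / σ11)
          - (s22 - 2 * (t / σ11) * s12 + t ^ 2 / σ11 ^ 2 * s11)
            / (2 * (σ22 - t ^ 2 / σ11)))
        ((s12 * σ11 * σ22 + (σ11 * σ22 * A - s22 * σ11 - s11 * σ22) * t
            + s12 * t ^ 2 - A * t ^ 3) / (t ^ 2 - σ11 * σ22) ^ 2)
        t :=
  eta_hasDerivAt_general σ11 σ22 s11 s22 s12 A C h11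
end

section
/- Fix real numbers σ11 > 0, σ22 > 0, s11, s22, s12, A, and C. For t in the open interval D = (−√(σ11·σ22), √(σ11·σ22)) define v(t) = σ22 − t²/σ11, q(t) = s22 − 2·(t/σ11)·s12 + (t²/σ11²)·s11, and η(t) = C − (A/2)·log v(t) − q(t)/(2·v(t)); define the polynomial P(t) = s12·σ11·σ22 + (σ11·σ22·A − s22·σ11 − s11·σ22)·t + s12·t² − A·t³. Then for every t ∈ D, the derivative of η at t is zero if and only if P(t) = 0. -/
/-!
Differentiating `η` and clearing the common denominator `(σ11 · v(t))² = (σ11σ22 − t²)²`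
shows `η'(t) = P(t) / (σ11σ22 − t²)²`. On `D` we have `t² < σ11σ22`, so this denominator
does not vanish and `η'(t) = 0` exactly when `P(t) = 0`.
-/

section DPER

variable (σ11 σ22 s11 s22 s12 A C t : ℝ)

lemma hasDerivAt_condVar :
    HasDerivAt (fun t : ℝ => σ22 - t ^ 2 / σ11) (-(2 * t / σ11)) t := by
  simpa using ((hasDerivAt_pow 2 t).div_const σ11).const_sub σ22

lemma hasDerivAt_condQuadForm :
    HasDerivAt (fun t : ℝ => s22 - 2 * (t / σ11) * s12 + t ^ 2 / σ11 ^ 2 * s11)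
      (-(2 * (1 / σ11) * s12) + 2 * t / σ11 ^ 2 * s11) t := by
  have hlin : HasDerivAt (fun t : ℝ => s22 - 2 * (t / σ11) * s12) (-(2 * (1 / σ11) * s12)) t := by
    simpa using ((((hasDerivAt_id t).div_const σ11).const_mul 2).mul_const s12).const_sub s22
  have hquad : HasDerivAt (fun t : ℝ => t ^ 2 / σ11 ^ 2 * s11) (2 * t / σ11 ^ 2 * s11) t := by
    simpa using ((hasDerivAt_pow 2 t).div_const (σ11 ^ 2)).mul_const s11
  exact hlin.add hquad

lemma hasDerivAt_eta (hσ : σ11 ≠ 0) (ht : t ^ 2 ≠ σ11 * σ22) :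
    HasDerivAt (fun t : ℝ => C - A / 2 * Real.log (σ22 - t ^ 2 / σ11)
        - (s22 - 2 * (t / σ11) * s12 + t ^ 2 / σ11 ^ 2 * s11) / (2 * (σ22 - t ^ 2 / σ11)))
      ((s12 * σ11 * σ22 + (σ11 * σ22 * A - s22 * σ11 - s11 * σ22) * t
          + s12 * t ^ 2 - A * t ^ 3) / (σ11 * σ22 - t ^ 2) ^ 2) t := by
  have hv : σ22 - t ^ 2 / σ11 ≠ 0 := by
    rwa [sub_ne_zero, ne_comm, ne_eq, div_eq_iff hσ, mul_comm]
  have hV := hasDerivAt_condVar σ11 σ22 t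
  have hη := ((hV.log hv).const_mul (A / 2)).const_sub C |>.sub
    ((hasDerivAt_condQuadForm σ11 s11 s22 s12 t).div (hV.const_mul 2) (mul_ne_zero two_ne_zero hv))
  refine hη.congr_deriv ?_
  have hD : σ11 * σ22 - t ^ 2 ≠ 0 := sub_ne_zero.mpr (Ne.symm ht)
  field_simp
  ring

end DPER

theorem eta_deriv_eq_zero_iff_cubic_general
    (σ11 σ22 s11 s22 s12 A C : ℝ) :
    ∀ t ∈ Set.Ioo (-Real.sqrt (σ11 * σ22)) (Real.sqrt (σ11 * σ22)),
      (deriv (fun t : ℝ => C - A / 2 * Real.log (σ22 - t ^ 2 / σ11)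
          - (s22 - 2 * (t / σ11) * s12 + t ^ 2 / σ11 ^ 2 * s11)
            / (2 * (σ22 - t ^ 2 / σ11))) t = 0
        ↔ s12 * σ11 * σ22 + (σ11 * σ22 * A - s22 * σ11 - s11 * σ22) * t
            + s12 * t ^ 2 - A * t ^ 3 = 0) := by
  rintro t ⟨hlo, hhi⟩
  have ht : t ^ 2 < σ11 * σ22 := Real.sq_lt.mpr ⟨hlo, hhi⟩
  have hσ : σ11 ≠ 0 := by
    rintro rfl
    nlinarith [sq_nonneg t]
  rw [(hasDerivAt_eta σ11 σ22 s11 s22 s12 A C t hσ ht.ne).deriv,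
    div_eq_zero_iff, or_iff_left (pow_ne_zero 2 (sub_pos.mpr ht).ne')]

/-- On the open interval `(−√(σ11·σ22), √(σ11·σ22))`, the stationarity equation
`dη/dσ12 = 0` for the DPER profile log-likelihood `η` is equivalent to the vanishing
of the cubic polynomial `P`. -/
theorem eta_deriv_eq_zero_iff_cubic
    (σ11 σ22 s11 s22 s12 A C : ℝ) (h11 : 0 < σ11) (h22 : 0 < σ22) :
    ∀ t ∈ Set.Ioo (-Real.sqrt (σ11 * σ22)) (Real.sqrt (σ11 * σ22)),
      (deriv (fun t : ℝ => C - A / 2 * Real.log (σ22 - t ^ 2 / σ11)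
          - (s22 - 2 * (t / σ11) * s12 + t ^ 2 / σ11 ^ 2 * s11)
            / (2 * (σ22 - t ^ 2 / σ11))) t = 0
        ↔ s12 * σ11 * σ22 + (σ11 * σ22 * A - s22 * σ11 - s11 * σ22) * t
            + s12 * t ^ 2 - A * t ^ 3 = 0) :=
  eta_deriv_eq_zero_iff_cubic_general σ11 σ22 s11 s22 s12 A C
end

section
/- Fix real numbers σ11 > 0, σ22 > 0, s11 ≥ 0, s22 ≥ 0, s12 with s12² ≤ s11·s22, and A > 0, and assume the nondegeneracy condition (★): s12 ≠ (s22·σ11 + s11·σ22)/(2√(σ11·σ22)) and s12 ≠ −(s22·σ11 + s11·σ22)/(2√(σ11·σ22)). For t in D = (−√(σ11·σ22), √(σ11·σ22)) define φ(t) = −(A/2)·log(σ22 − t²/σ11) and ψ(t) = (s22 − 2·(t/σ11)·s12 + (t²/σ11²)·s11)/(2·(σ22 − t²/σ11)). Then the ratio (−ψ(t))/φ(t) tends to −∞ as t tends to √(σ11·σ22) from the left, and tends to −∞ as t tends to −√(σ11·σ22) from the right. -/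
/-!
With `u(t) = σ22 − t²/σ11`, the ratio equals `N(t)/A · (u(t) log u(t))⁻¹`, where `N` is the
numerator of `ψ`. As `t` tends to an endpoint, `u(t) → 0⁺`, so `u log u → 0⁻` and its inverse
tends to `−∞`, while `N(t)` tends to a positive limit: `N ≥ 0` by Cauchy–Schwarz, and (★) says
exactly that `N` does not vanish at the endpoint. The left endpoint follows from the right one
under `t ↦ −t`, `s12 ↦ −s12`.
-/

open Real Filter Topology

lemma tendsto_inv_mul_log_nhdsGT_zero :
    Tendsto (fun x : ℝ => (x * log x)⁻¹) (𝓝[>] 0) atBot := by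
  refine tendsto_inv_nhdsLT_zero.comp (tendsto_nhdsWithin_iff.2 ⟨?_, ?_⟩)
  · simpa using continuous_mul_log.continuousAt.tendsto.mono_left (nhdsWithin_le_nhds (a := 0))
  · filter_upwards [Ioo_mem_nhdsGT one_pos] with x hx using mul_log_neg hx.1 hx.2

lemma quadratic_nonneg_of_sq_le_mul {a b c : ℝ} (ha : 0 ≤ a) (hc : 0 ≤ c) (hb : b ^ 2 ≤ a * c)
    (x : ℝ) : 0 ≤ c - 2 * x * b + x ^ 2 * a := by
  rcases ha.eq_or_lt with rfl | ha
  · have hb0 : b = 0 := pow_eq_zero_iff two_ne_zero |>.1 (le_antisymm (by simpa using hb)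
      (sq_nonneg b))
    simpa [hb0] using hc
  · -- `a · (c − 2xb + x²a) = (a x − b)² + (a c − b²)`
    nlinarith [sq_nonneg (a * x - b)]

lemma neg_div_two_mul_div_neg_mul_log (N u A : ℝ) :
    -(N / (2 * u)) / (-(A / 2) * log u) = N / A * (u * log u)⁻¹ := by
  ring

section Endpoint

variable {σ11 σ22 : ℝ}

lemma tendsto_sub_sq_div_nhdsGT_zero (h11 : 0 < σ11) (h22 : 0 < σ22) :
    Tendsto (fun t : ℝ => σ22 - t ^ 2 / σ11) (𝓝[<] √(σ11 * σ22)) (𝓝[>] 0) := by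
  have hr0 : 0 < √(σ11 * σ22) := sqrt_pos.2 (mul_pos h11 h22)
  have hr2 : √(σ11 * σ22) ^ 2 = σ11 * σ22 := sq_sqrt (mul_pos h11 h22).le
  refine tendsto_nhdsWithin_iff.2 ⟨?_, ?_⟩
  · have hlim : Tendsto (fun t : ℝ => σ22 - t ^ 2 / σ11) (𝓝[<] √(σ11 * σ22))
        (𝓝 (σ22 - √(σ11 * σ22) ^ 2 / σ11)) :=
      (Continuous.tendsto (by fun_prop) _).mono_left nhdsWithin_le_nhds
    rwa [hr2, mul_div_cancel_left₀ _ h11.ne', sub_self] at hlim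
  · filter_upwards [Ioo_mem_nhdsLT hr0] with t ht
    have : t ^ 2 < σ11 * σ22 := hr2 ▸ pow_lt_pow_left₀ ht.2 ht.1.le two_ne_zero
    rw [Set.mem_Ioi, sub_pos, div_lt_iff₀ h11]
    linarith

lemma mul_psi_numerator_sqrt (h11 : 0 < σ11) (h22 : 0 < σ22) (s11 s22 s12 : ℝ) :
    σ11 * (s22 - 2 * (√(σ11 * σ22) / σ11) * s12 + √(σ11 * σ22) ^ 2 / σ11 ^ 2 * s11)
      = s22 * σ11 + s11 * σ22 - 2 * √(σ11 * σ22) * s12 := by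
  rw [sq_sqrt (mul_pos h11 h22).le]
  field_simp
  ring

lemma psi_numerator_sqrt_pos (h11 : 0 < σ11) (h22 : 0 < σ22) {s11 s22 s12 : ℝ}
    (hs11 : 0 ≤ s11) (hs22 : 0 ≤ s22) (hcs : s12 ^ 2 ≤ s11 * s22)
    (hstar : s12 ≠ (s22 * σ11 + s11 * σ22) / (2 * √(σ11 * σ22))) :
    0 < s22 - 2 * (√(σ11 * σ22) / σ11) * s12 + √(σ11 * σ22) ^ 2 / σ11 ^ 2 * s11 := by
  refine (div_pow (√(σ11 * σ22)) σ11 2 ▸ quadratic_nonneg_of_sq_le_mul hs11 hs22 hcs _).lt_of_ne' ?_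
  intro hzero
  apply hstar
  rw [eq_div_iff (by positivity)]
  linarith [mul_psi_numerator_sqrt h11 h22 s11 s22 s12, congrArg (σ11 * ·) hzero]

lemma neg_psi_div_phi_tendsto_atBot_nhdsLT_sqrt (h11 : 0 < σ11) (h22 : 0 < σ22)
    {s11 s22 s12 A : ℝ} (hs11 : 0 ≤ s11) (hs22 : 0 ≤ s22) (hcs : s12 ^ 2 ≤ s11 * s22)
    (hA : 0 < A) (hstar : s12 ≠ (s22 * σ11 + s11 * σ22) / (2 * √(σ11 * σ22))) :
    Tendsto (fun t : ℝ =>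
        (-((s22 - 2 * (t / σ11) * s12 + t ^ 2 / σ11 ^ 2 * s11) / (2 * (σ22 - t ^ 2 / σ11))))
          / (-(A / 2) * log (σ22 - t ^ 2 / σ11)))
      (𝓝[<] √(σ11 * σ22)) atBot := by
  have hN : Tendsto (fun t : ℝ => (s22 - 2 * (t / σ11) * s12 + t ^ 2 / σ11 ^ 2 * s11) / A)
      (𝓝[<] √(σ11 * σ22))
      (𝓝 ((s22 - 2 * (√(σ11 * σ22) / σ11) * s12 + √(σ11 * σ22) ^ 2 / σ11 ^ 2 * s11) / A)) :=
    (Continuous.tendsto (by fun_prop) _).mono_left nhdsWithin_le_nhds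
  refine (hN.pos_mul_atBot (div_pos (psi_numerator_sqrt_pos h11 h22 hs11 hs22 hcs hstar) hA)
    (tendsto_inv_mul_log_nhdsGT_zero.comp (tendsto_sub_sq_div_nhdsGT_zero h11 h22))).congr
    fun t => (neg_div_two_mul_div_neg_mul_log _ _ _).symm

end Endpoint

/-- The ratio `(−ψ)/φ` of the quadratic-over-variance term to the log-variance term of
the DPER profile log-likelihood tends to `−∞` at both endpoints of the interval
`(−√(σ11·σ22), √(σ11·σ22))`, under the nondegeneracy condition (★) and `A > 0`. -/
theorem neg_psi_div_phi_tendsto_atBot_boundary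
    (σ11 σ22 s11 s22 s12 A : ℝ) (h11 : 0 < σ11) (h22 : 0 < σ22)
    (hs11 : 0 ≤ s11) (hs22 : 0 ≤ s22) (hcs : s12 ^ 2 ≤ s11 * s22) (hA : 0 < A)
    (hstar1 : s12 ≠ (s22 * σ11 + s11 * σ22) / (2 * Real.sqrt (σ11 * σ22)))
    (hstar2 : s12 ≠ -((s22 * σ11 + s11 * σ22) / (2 * Real.sqrt (σ11 * σ22)))) :
    Tendsto (fun t : ℝ =>
        (-((s22 - 2 * (t / σ11) * s12 + t ^ 2 / σ11 ^ 2 * s11)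
            / (2 * (σ22 - t ^ 2 / σ11))))
          / (-(A / 2) * Real.log (σ22 - t ^ 2 / σ11)))
      (nhdsWithin (Real.sqrt (σ11 * σ22)) (Set.Iio (Real.sqrt (σ11 * σ22)))) atBot ∧
    Tendsto (fun t : ℝ =>
        (-((s22 - 2 * (t / σ11) * s12 + t ^ 2 / σ11 ^ 2 * s11)
            / (2 * (σ22 - t ^ 2 / σ11))))
          / (-(A / 2) * Real.log (σ22 - t ^ 2 / σ11)))
      (nhdsWithin (-Real.sqrt (σ11 * σ22)) (Set.Ioi (-Real.sqrt (σ11 * σ22)))) atBot := by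
  refine ⟨neg_psi_div_phi_tendsto_atBot_nhdsLT_sqrt h11 h22 hs11 hs22 hcs hA hstar1, ?_⟩
  have hstar2' : -s12 ≠ (s22 * σ11 + s11 * σ22) / (2 * √(σ11 * σ22)) :=
    fun h => hstar2 (neg_eq_iff_eq_neg.1 h)
  have hreflected := (neg_psi_div_phi_tendsto_atBot_nhdsLT_sqrt h11 h22 hs11 hs22
    (by rwa [neg_sq]) hA hstar2').comp tendsto_neg_nhdsGT_neg
  refine hreflected.congr fun t => ?_
  simp only [Function.comp_apply, neg_sq]
  ring
end

section
/- Fix real numbers σ11 > 0, σ22 > 0, s11 ≥ 0, s22 ≥ 0, s12 with s12² ≤ s11·s22, A ≥ 0, and C, and assume the nondegeneracy condition (★): s12 ≠ (s22·σ11 + s11·σ22)/(2√(σ11·σ22)) and s12 ≠ −(s22·σ11 + s11·σ22)/(2√(σ11·σ22)). Define η(t) = C − (A/2)·log(σ22 − t²/σ11) − (s22 − 2·(t/σ11)·s12 + (t²/σ11²)·s11)/(2·(σ22 − t²/σ11)) for t in D = (−√(σ11·σ22), √(σ11·σ22)). Then η(t) tends to −∞ as t tends to √(σ11·σ22) from the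 left, and η(t) tends to −∞ as t tends to −√(σ11·σ22) from the right. -/
/-!
Near either endpoint `c = ±√(σ11 σ22)` the variance `f t = σ22 - t²/σ11` tends to `0⁺` while
the numerator `N t` of the last term tends to `(s22 σ11 + s11 σ22 - 2 c s12) / σ11`. By Cauchy–Schwarz and AM–GM,
`2 √(σ11 σ22) |s12| ≤ s22 σ11 + s11 σ22`, and (★) makes this strict for both signs of `c`,
so the numerator has a positive limit. The term `-N / (2 f)` then diverges like `-1 / f`,
which beats the logarithmic term because `f log f → 0`.
-/

open Real Filter Topology Set

theorem tendsto_mul_log_add_div_atTop {α : Type*} {l : Filter α} {f N : α → ℝ} {L : ℝ}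
    (a : ℝ) (hf : Tendsto f l (𝓝[>] 0)) (hN : Tendsto N l (𝓝 L)) (hL : 0 < L) :
    Tendsto (fun t => a * log (f t) + N t / f t) l atTop := by
  have hflogf : Tendsto (fun t => f t * log (f t)) l (𝓝 0) := by
    simpa [Function.comp_def] using
      (continuous_mul_log.tendsto 0).comp (hf.mono_right nhdsWithin_le_nhds)
  have hnum : Tendsto (fun t => a * (f t * log (f t)) + N t) l (𝓝 L) := by
    simpa using (hflogf.const_mul a).add hN
  refine (hnum.pos_mul_atTop hL (tendsto_inv_nhdsGT_zero.comp hf)).congr' ?_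
  filter_upwards [hf self_mem_nhdsWithin] with t (ht : 0 < f t)
  simp only [Function.comp_apply]
  field_simp

theorem two_mul_sqrt_mul_mul_abs_le {σ11 σ22 s11 s22 s12 : ℝ} (h11 : 0 ≤ σ11) (h22 : 0 ≤ σ22)
    (hs11 : 0 ≤ s11) (hs22 : 0 ≤ s22) (hcs : s12 ^ 2 ≤ s11 * s22) :
    2 * √(σ11 * σ22) * |s12| ≤ s22 * σ11 + s11 * σ22 := by
  refine (pow_le_pow_iff_left₀ (by positivity) (by positivity) two_ne_zero).mp ?_
  calc (2 * √(σ11 * σ22) * |s12|) ^ 2 = 4 * (σ11 * σ22) * s12 ^ 2 := by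
        rw [mul_pow, mul_pow, sq_sqrt (by positivity), sq_abs]; ring
    _ ≤ 4 * (σ11 * σ22) * (s11 * s22) := by gcongr
    _ ≤ (s22 * σ11 + s11 * σ22) ^ 2 := by nlinarith [sq_nonneg (s22 * σ11 - s11 * σ22)]

section Endpoint

variable {σ11 σ22 s11 s22 s12 c : ℝ}

theorem sub_sq_div_pos_of_sq_lt (h11 : 0 < σ11) {t : ℝ} (ht : t ^ 2 < σ11 * σ22) :
    0 < σ22 - t ^ 2 / σ11 := by
  rw [sub_pos, div_lt_iff₀ h11]
  linarith

theorem numerator_pos_of_sq_eq (h11 : 0 < σ11) (hc : c ^ 2 = σ11 * σ22)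
    (hlt : 2 * c * s12 < s22 * σ11 + s11 * σ22) :
    0 < s22 - 2 * (c / σ11) * s12 + c ^ 2 / σ11 ^ 2 * s11 := by
  have heq : s22 - 2 * (c / σ11) * s12 + c ^ 2 / σ11 ^ 2 * s11
      = (s22 * σ11 + s11 * σ22 - 2 * c * s12) / σ11 := by
    field_simp
    linear_combination s11 * hc
  rw [heq]
  exact div_pos (by linarith) h11

theorem tendsto_eta_atBot_of_sq_eq {l : Filter ℝ} (A C : ℝ) (h11 : 0 < σ11) (hl : l ≤ 𝓝 c)
    (hc : c ^ 2 = σ11 * σ22) (hin : ∀ᶠ t in l, t ^ 2 < σ11 * σ22)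
    (hlt : 2 * c * s12 < s22 * σ11 + s11 * σ22) :
    Tendsto (fun t : ℝ => C - A / 2 * log (σ22 - t ^ 2 / σ11)
        - (s22 - 2 * (t / σ11) * s12 + t ^ 2 / σ11 ^ 2 * s11) / (2 * (σ22 - t ^ 2 / σ11)))
      l atBot := by
  have hvar : Tendsto (fun t : ℝ => σ22 - t ^ 2 / σ11) l (𝓝[>] 0) := by
    refine tendsto_nhdsWithin_of_tendsto_nhds_of_eventually_within _ ?_ ?_
    · have hzero : σ22 - c ^ 2 / σ11 = 0 := by rw [hc]; field_simp; ring
      rw [← hzero]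
      exact ((by fun_prop : Continuous fun t : ℝ => σ22 - t ^ 2 / σ11).tendsto c).mono_left hl
    · filter_upwards [hin] with t ht using sub_sq_div_pos_of_sq_lt h11 ht
  have hnum : Tendsto (fun t : ℝ => (s22 - 2 * (t / σ11) * s12 + t ^ 2 / σ11 ^ 2 * s11) / 2) l
      (𝓝 ((s22 - 2 * (c / σ11) * s12 + c ^ 2 / σ11 ^ 2 * s11) / 2)) :=
    ((by fun_prop : Continuous fun t : ℝ =>
      (s22 - 2 * (t / σ11) * s12 + t ^ 2 / σ11 ^ 2 * s11) / 2).tendsto c).mono_left hl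
  have hdiv := tendsto_mul_log_add_div_atTop (A / 2) hvar hnum
    (half_pos (numerator_pos_of_sq_eq h11 hc hlt))
  refine (tendsto_atBot_add_const_left l C (tendsto_neg_atTop_atBot.comp hdiv)).congr
    fun t => ?_
  simp only [Function.comp_apply, div_div]
  ring

end Endpoint

theorem eta_tendsto_atBot_boundary_general
    (σ11 σ22 s11 s22 s12 A C : ℝ) (h11 : 0 < σ11) (h22 : 0 < σ22)
    (hs11 : 0 ≤ s11) (hs22 : 0 ≤ s22) (hcs : s12 ^ 2 ≤ s11 * s22)
    (hstar1 : s12 ≠ (s22 * σ11 + s11 * σ22) / (2 * Real.sqrt (σ11 * σ22)))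
    (hstar2 : s12 ≠ -((s22 * σ11 + s11 * σ22) / (2 * Real.sqrt (σ11 * σ22)))) :
    Tendsto (fun t : ℝ => C - A / 2 * Real.log (σ22 - t ^ 2 / σ11)
        - (s22 - 2 * (t / σ11) * s12 + t ^ 2 / σ11 ^ 2 * s11)
          / (2 * (σ22 - t ^ 2 / σ11)))
      (nhdsWithin (Real.sqrt (σ11 * σ22)) (Set.Iio (Real.sqrt (σ11 * σ22)))) atBot ∧
    Tendsto (fun t : ℝ => C - A / 2 * Real.log (σ22 - t ^ 2 / σ11)
        - (s22 - 2 * (t / σ11) * s12 + t ^ 2 / σ11 ^ 2 * s11)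
          / (2 * (σ22 - t ^ 2 / σ11)))
      (nhdsWithin (-Real.sqrt (σ11 * σ22)) (Set.Ioi (-Real.sqrt (σ11 * σ22)))) atBot := by
  set r := √(σ11 * σ22)
  have hr : 0 < r := sqrt_pos.mpr (mul_pos h11 h22)
  have hr2 : r ^ 2 = σ11 * σ22 := sq_sqrt (mul_pos h11 h22).le
  have hbound := two_mul_sqrt_mul_mul_abs_le h11.le h22.le hs11 hs22 hcs
  have hlt_pos : 2 * r * s12 < s22 * σ11 + s11 * σ22 := by
    refine lt_of_le_of_ne (le_trans ?_ hbound) ?_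
    · gcongr; exact le_abs_self s12
    · rwa [ne_eq, eq_div_iff (by positivity), mul_comm] at hstar1
  have hlt_neg : 2 * -r * s12 < s22 * σ11 + s11 * σ22 := by
    refine lt_of_le_of_ne (le_trans ?_ hbound) ?_
    · nlinarith [neg_abs_le s12]
    · rw [ne_eq, ← neg_eq_iff_eq_neg, eq_div_iff (by positivity)] at hstar2
      contrapose! hstar2
      linarith
  have hin : ∀ t ∈ Ioo (-r) r, t ^ 2 < σ11 * σ22 := fun t ht => hr2 ▸ sq_lt_sq' ht.1 ht.2
  constructor
  · exact tendsto_eta_atBot_of_sq_eq A C h11 nhdsWithin_le_nhds hr2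
      (mem_of_superset (Ioo_mem_nhdsLT (by linarith)) hin) hlt_pos
  · exact tendsto_eta_atBot_of_sq_eq A C h11 nhdsWithin_le_nhds (by rw [neg_sq, hr2])
      (mem_of_superset (Ioo_mem_nhdsGT (by linarith)) hin) hlt_neg

/-- The DPER profile log-likelihood `η` tends to `−∞` at both endpoints of the interval
`(−√(σ11·σ22), √(σ11·σ22))`, under the nondegeneracy condition (★). -/
theorem eta_tendsto_atBot_boundary
    (σ11 σ22 s11 s22 s12 A C : ℝ) (h11 : 0 < σ11) (h22 : 0 < σ22)
    (hs11 : 0 ≤ s11) (hs22 : 0 ≤ s22) (hcs : s12 ^ 2 ≤ s11 * s22) (hA : 0 ≤ A)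
    (hstar1 : s12 ≠ (s22 * σ11 + s11 * σ22) / (2 * Real.sqrt (σ11 * σ22)))
    (hstar2 : s12 ≠ -((s22 * σ11 + s11 * σ22) / (2 * Real.sqrt (σ11 * σ22)))) :
    Tendsto (fun t : ℝ => C - A / 2 * Real.log (σ22 - t ^ 2 / σ11)
        - (s22 - 2 * (t / σ11) * s12 + t ^ 2 / σ11 ^ 2 * s11)
          / (2 * (σ22 - t ^ 2 / σ11)))
      (nhdsWithin (Real.sqrt (σ11 * σ22)) (Set.Iio (Real.sqrt (σ11 * σ22)))) atBot ∧
    Tendsto (fun t : ℝ => C - A / 2 * Real.log (σ22 - t ^ 2 / σ11)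
        - (s22 - 2 * (t / σ11) * s12 + t ^ 2 / σ11 ^ 2 * s11)
          / (2 * (σ22 - t ^ 2 / σ11)))
      (nhdsWithin (-Real.sqrt (σ11 * σ22)) (Set.Ioi (-Real.sqrt (σ11 * σ22)))) atBot :=
  eta_tendsto_atBot_boundary_general σ11 σ22 s11 s22 s12 A C h11 h22 hs11 hs22 hcs hstar1 hstar2
end

section
/- Fix real numbers σ11 > 0, σ22 > 0, s11 ≥ 0, s22 ≥ 0, s12 with s12² ≤ s11·s22, and A ≥ 0, and assume the nondegeneracy condition (★): s12 ≠ (s22·σ11 + s11·σ22)/(2√(σ11·σ22)) and s12 ≠ −(s22·σ11 + s11·σ22)/(2√(σ11·σ22)). Then the polynomial P(t) = s12·σ11·σ22 + (σ11·σ22·A − s22·σ11 − s11·σ22)·t + s12·t² − A·t³ has at least one real root, and moreover has a root in the open interval (−√(σ11·σ22), √(σ11·σ22)). -/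
/-!
Write `c = √(σ11·σ22)` and `K = s22·σ11 + s11·σ22`. Then `P(c) = c·(2·s12·c − K)` and
`P(−c) = c·(2·s12·c + K)`, so `P(c)·P(−c) = c²·((2·s12·c)² − K²)`. Cauchy–Schwarz
`s12² ≤ s11·s22` together with AM–GM `4·s11·s22·σ11·σ22 ≤ K²` gives `(2·s12·c)² ≤ K²`,
and (★) says exactly that this inequality is strict. Hence `P` changes sign on `[−c, c]`,
and the intermediate value theorem provides a root in `(−c, c)`.
-/

open Real Set

theorem exists_mem_Ioo_eq_zero_of_mul_neg {α δ : Type*} [ConditionallyCompleteLinearOrder α]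
    [TopologicalSpace α] [OrderTopology α] [DenselyOrdered α] [Ring δ] [LinearOrder δ]
    [IsStrictOrderedRing δ] [TopologicalSpace δ] [OrderClosedTopology δ] {a b : α}
    {f : α → δ} (hab : a ≤ b) (hf : ContinuousOn f (Icc a b)) (hsign : f a * f b < 0) :
    ∃ t ∈ Ioo a b, f t = 0 := by
  rcases mul_neg_iff.1 hsign with ⟨ha, hb⟩ | ⟨ha, hb⟩
  · exact intermediate_value_Ioo' hab hf ⟨hb, ha⟩
  · exact intermediate_value_Ioo hab hf ⟨ha, hb⟩

/-- The numerator `P` of the derivative of the profile log-likelihood. -/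
def dperNumerator {R : Type*} [CommRing R] (σ11 σ22 s11 s22 s12 A t : R) : R :=
  s12 * σ11 * σ22 + (σ11 * σ22 * A - s22 * σ11 - s11 * σ22) * t + s12 * t ^ 2 - A * t ^ 3

section

variable {R : Type*} [CommRing R] {σ11 σ22 s11 s22 s12 c : R}

theorem dperNumerator_mul_dperNumerator_neg (A : R) (hc : c ^ 2 = σ11 * σ22) :
    dperNumerator σ11 σ22 s11 s22 s12 A c * dperNumerator σ11 σ22 s11 s22 s12 A (-c) =
      c ^ 2 * ((2 * s12 * c) ^ 2 - (s22 * σ11 + s11 * σ22) ^ 2) := by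
  have hc_val : dperNumerator σ11 σ22 s11 s22 s12 A c =
      c * (2 * s12 * c - (s22 * σ11 + s11 * σ22)) := by
    unfold dperNumerator
    linear_combination (s12 + A * c) * hc.symm
  have hc_neg : dperNumerator σ11 σ22 s11 s22 s12 A (-c) =
      c * (2 * s12 * c + (s22 * σ11 + s11 * σ22)) := by
    unfold dperNumerator
    linear_combination (s12 - A * c) * hc.symm
  rw [hc_val, hc_neg]
  ring

theorem sq_two_mul_mul_le_sq [LinearOrder R] [IsStrictOrderedRing R]
    (hc : c ^ 2 = σ11 * σ22) (hcs : s12 ^ 2 ≤ s11 * s22) :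
    (2 * s12 * c) ^ 2 ≤ (s22 * σ11 + s11 * σ22) ^ 2 :=
  calc (2 * s12 * c) ^ 2 = 4 * s12 ^ 2 * (σ11 * σ22) := by rw [← hc]; ring
    _ ≤ 4 * (s11 * s22) * (σ11 * σ22) := by gcongr; exact hc ▸ sq_nonneg c
    _ ≤ (s22 * σ11 + s11 * σ22) ^ 2 := by nlinarith [sq_nonneg (s22 * σ11 - s11 * σ22)]

end

theorem cubic_has_root_general
    (σ11 σ22 s11 s22 s12 A : ℝ) (h11 : 0 < σ11) (h22 : 0 < σ22)
    (hcs : s12 ^ 2 ≤ s11 * s22)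
    (hstar1 : s12 ≠ (s22 * σ11 + s11 * σ22) / (2 * Real.sqrt (σ11 * σ22)))
    (hstar2 : s12 ≠ -((s22 * σ11 + s11 * σ22) / (2 * Real.sqrt (σ11 * σ22)))) :
    (∃ t : ℝ, s12 * σ11 * σ22 + (σ11 * σ22 * A - s22 * σ11 - s11 * σ22) * t
        + s12 * t ^ 2 - A * t ^ 3 = 0) ∧
    (∃ t ∈ Set.Ioo (-Real.sqrt (σ11 * σ22)) (Real.sqrt (σ11 * σ22)),
      s12 * σ11 * σ22 + (σ11 * σ22 * A - s22 * σ11 - s11 * σ22) * t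
        + s12 * t ^ 2 - A * t ^ 3 = 0) := by
  set c := √(σ11 * σ22)
  set K := s22 * σ11 + s11 * σ22
  have hc_pos : 0 < c := sqrt_pos.2 (mul_pos h11 h22)
  have hc : c ^ 2 = σ11 * σ22 := sq_sqrt (mul_pos h11 h22).le
  have hne : (2 * s12 * c) ^ 2 ≠ K ^ 2 := by
    rw [← neg_div, ne_eq, eq_div_iff (by positivity)] at hstar2
    rw [ne_eq, eq_div_iff (by positivity)] at hstar1
    rw [Ne, sq_eq_sq_iff_eq_or_eq_neg]
    rintro (h | h)
    · exact hstar1 (by linear_combination h)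
    · exact hstar2 (by linear_combination h)
  have hsign : dperNumerator σ11 σ22 s11 s22 s12 A (-c) *
      dperNumerator σ11 σ22 s11 s22 s12 A c < 0 := by
    rw [mul_comm, dperNumerator_mul_dperNumerator_neg A hc]
    exact mul_neg_of_pos_of_neg (by positivity)
      (sub_neg.2 ((sq_two_mul_mul_le_sq hc hcs).lt_of_ne hne))
  obtain ⟨t, ht, hPt⟩ := exists_mem_Ioo_eq_zero_of_mul_neg (neg_le_self hc_pos.le)
    (by unfold dperNumerator; fun_prop) hsign
  exact ⟨⟨t, hPt⟩, t, ht, hPt⟩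

/-- The cubic polynomial `P` of Theorems 2 and 4 of the DPER paper has at least one real
root, and moreover has a root in the open interval `(−√(σ11·σ22), √(σ11·σ22))`. -/
theorem cubic_has_root
    (σ11 σ22 s11 s22 s12 A : ℝ) (h11 : 0 < σ11) (h22 : 0 < σ22)
    (hs11 : 0 ≤ s11) (hs22 : 0 ≤ s22) (hcs : s12 ^ 2 ≤ s11 * s22) (hA : 0 ≤ A)
    (hstar1 : s12 ≠ (s22 * σ11 + s11 * σ22) / (2 * Real.sqrt (σ11 * σ22)))
    (hstar2 : s12 ≠ -((s22 * σ11 + s11 * σ22) / (2 * Real.sqrt (σ11 * σ22)))) :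
    (∃ t : ℝ, s12 * σ11 * σ22 + (σ11 * σ22 * A - s22 * σ11 - s11 * σ22) * t
        + s12 * t ^ 2 - A * t ^ 3 = 0) ∧
    (∃ t ∈ Set.Ioo (-Real.sqrt (σ11 * σ22)) (Real.sqrt (σ11 * σ22)),
      s12 * σ11 * σ22 + (σ11 * σ22 * A - s22 * σ11 - s11 * σ22) * t
        + s12 * t ^ 2 - A * t ^ 3 = 0) :=
  cubic_has_root_general σ11 σ22 s11 s22 s12 A h11 h22 hcs hstar1 hstar2
end
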